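/- arXiv:2107.13626 — 2 statements merged into one kernel-verified Lean document; each statement's English description precedes it below -/
import Mathlib

section
/- Let a = [[t²+1, t],[t, 1]] ∈ SL₂(ℤ[t]), acting on column vectors in (ℤ[t])². Then the additive subgroup of (ℤ[t])² generated by the set ⋃_{k∈ℤ} a^k·ℤ² equals all of (ℤ[t])². -/
open Polynomial Matrix

/-- the additive subgroup of (ℤ[t])² generated by ⋃_{k∈ℤ} aᵏ·ℤ²
is all of (ℤ[t])², where a = [[t²+1,t],[t,1]] ∈ SL₂(ℤ[t]). -/
theorem stmt_8 (a : Matrix.SpecialLinearGroup (Fin 2) (Polynomial ℤ))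
    (ha : (a : Matrix (Fin 2) (Fin 2) (Polynomial ℤ)) =
      !![Polynomial.X ^ 2 + 1, Polynomial.X; Polynomial.X, 1]) :
    AddSubgroup.closure {v : Fin 2 → Polynomial ℤ | ∃ (k : ℤ) (w : Fin 2 → ℤ),
      v = ((a ^ k : Matrix.SpecialLinearGroup (Fin 2) (Polynomial ℤ)) :
        Matrix (Fin 2) (Fin 2) (Polynomial ℤ)).mulVec
          (fun i => ((w i : ℤ) : Polynomial ℤ))} = ⊤ := by
  set S : Set (Fin 2 → Polynomial ℤ) := {v : Fin 2 → Polynomial ℤ | ∃ (k : ℤ) (w : Fin 2 → ℤ),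
      v = ((a ^ k : Matrix.SpecialLinearGroup (Fin 2) (Polynomial ℤ)) :
        Matrix (Fin 2) (Fin 2) (Polynomial ℤ)).mulVec
          (fun i => ((w i : ℤ) : Polynomial ℤ))} with hSdef
  set H := AddSubgroup.closure S with hH
  -- stability of H under multiplication by a and a⁻¹
  have hA : ∀ v ∈ H, (a : Matrix (Fin 2) (Fin 2) (Polynomial ℤ)).mulVec v ∈ H := by
    intro v hv
    induction hv using AddSubgroup.closure_induction with
    | mem x hx =>
      obtain ⟨k, w, rfl⟩ := hx
      refine AddSubgroup.subset_closure ⟨1 + k, w, ?_⟩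
      rw [_root_.zpow_add, zpow_one, Matrix.SpecialLinearGroup.coe_mul, ← Matrix.mulVec_mulVec]
    | zero => rw [Matrix.mulVec_zero]; exact zero_mem _
    | add x y _ _ hx hy => rw [Matrix.mulVec_add]; exact add_mem hx hy
    | neg x _ hx => rw [Matrix.mulVec_neg]; exact neg_mem hx
  have hB : ∀ v ∈ H,
      ((a⁻¹ : Matrix.SpecialLinearGroup (Fin 2) (Polynomial ℤ)) :
        Matrix (Fin 2) (Fin 2) (Polynomial ℤ)).mulVec v ∈ H := by
    intro v hv
    induction hv using AddSubgroup.closure_induction with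
    | mem x hx =>
      obtain ⟨k, w, rfl⟩ := hx
      refine AddSubgroup.subset_closure ⟨-1 + k, w, ?_⟩
      rw [_root_.zpow_add, _root_.zpow_neg_one, Matrix.SpecialLinearGroup.coe_mul, ← Matrix.mulVec_mulVec]
    | zero => rw [Matrix.mulVec_zero]; exact zero_mem _
    | add x y _ _ hx hy => rw [Matrix.mulVec_add]; exact add_mem hx hy
    | neg x _ hx => rw [Matrix.mulVec_neg]; exact neg_mem hx
  -- a⁻¹ as an explicit matrix
  have hainv : ((a⁻¹ : Matrix.SpecialLinearGroup (Fin 2) (Polynomial ℤ)) :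
      Matrix (Fin 2) (Fin 2) (Polynomial ℤ)) =
      !![1, -Polynomial.X; -Polynomial.X, Polynomial.X ^ 2 + 1] := by
    rw [Matrix.SpecialLinearGroup.coe_inv, ha, Matrix.adjugate_fin_two_of]
  -- powers of X are in H
  have key : ∀ n : ℕ, ![(X : Polynomial ℤ) ^ n, 0] ∈ H ∧ ![(0 : Polynomial ℤ), X ^ n] ∈ H := by
    intro n
    induction n with
    | zero =>
      constructor
      · exact AddSubgroup.subset_closure ⟨0, ![1, 0], by funext i; fin_cases i <;> simp⟩
      · exact AddSubgroup.subset_closure ⟨0, ![0, 1], by funext i; fin_cases i <;> simp⟩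
    | succ n ih =>
      have h1 : ![(X : Polynomial ℤ) ^ (n + 1), 0] ∈ H := by
        have hm := hA _ ih.2
        have heq : ![(X : Polynomial ℤ) ^ (n + 1), 0] =
            (a : Matrix (Fin 2) (Fin 2) (Polynomial ℤ)).mulVec ![0, X ^ n] - ![0, X ^ n] := by
          funext i
          fin_cases i <;>
            simp [ha, Matrix.mulVec, dotProduct, Fin.sum_univ_two] <;> ring
        rw [heq]
        exact sub_mem hm ih.2
      refine ⟨h1, ?_⟩
      have hm := hB _ ih.1
      have heq : ![(0 : Polynomial ℤ), X ^ (n + 1)] =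
          ![(X : Polynomial ℤ) ^ n, 0] -
            ((a⁻¹ : Matrix.SpecialLinearGroup (Fin 2) (Polynomial ℤ)) :
              Matrix (Fin 2) (Fin 2) (Polynomial ℤ)).mulVec ![X ^ n, 0] := by
        funext i
        fin_cases i <;>
          simp [hainv, Matrix.mulVec, dotProduct, Fin.sum_univ_two] <;> ring
      rw [heq]
      exact sub_mem ih.1 hm
  -- arbitrary polynomials in each coordinate
  have col : ∀ p : Polynomial ℤ, ![p, 0] ∈ H ∧ ![(0 : Polynomial ℤ), p] ∈ H := by
    intro p
    induction p using Polynomial.induction_on' with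
    | add p q hp hq =>
      constructor
      · have heq : ![p + q, (0 : Polynomial ℤ)] = ![p, 0] + ![q, 0] := by
          funext i; fin_cases i <;> simp
        rw [heq]; exact add_mem hp.1 hq.1
      · have heq : ![(0 : Polynomial ℤ), p + q] = ![0, p] + ![0, q] := by
          funext i; fin_cases i <;> simp
        rw [heq]; exact add_mem hp.2 hq.2
    | monomial n c =>
      constructor
      · have heq : ![(Polynomial.monomial n c : Polynomial ℤ), 0] =
            c • ![(X : Polynomial ℤ) ^ n, 0] := by
          funext i
          fin_cases i <;>
            simp [← Polynomial.C_mul_X_pow_eq_monomial, zsmul_eq_mul, Polynomial.C_eq_intCast]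
        rw [heq]; exact zsmul_mem (key n).1 c
      · have heq : ![(0 : Polynomial ℤ), Polynomial.monomial n c] =
            c • ![(0 : Polynomial ℤ), (X : Polynomial ℤ) ^ n] := by
          funext i
          fin_cases i <;>
            simp [← Polynomial.C_mul_X_pow_eq_monomial, zsmul_eq_mul, Polynomial.C_eq_intCast]
        rw [heq]; exact zsmul_mem (key n).2 c
  rw [eq_top_iff]
  rintro v -
  have hv : v = ![v 0, 0] + ![(0 : Polynomial ℤ), v 1] := by
    funext i; fin_cases i <;> simp
  rw [hv]
  exact add_mem (col (v 0)).1 (col (v 1)).2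
end

section
/- Let Θ be the set ℚ² (thought of as the edges [U,U]\U·𝔠 indexed by ε), and consider formal ℚ-linear combinations Σ_j α_j · g_j with g_j ∈ ℚ² distinct and α_j ≠ 0, which are 'cycles' in the sense that for each i ∈ {1,2} and each value v, the sum of α_j over all j with (g_j)_i' = v for the complementary coordinate pattern vanishes (i.e., the formal boundary over type-1 and type-2 vertices is zero). Then any such cycle R equals Σ_j α_j · S(g_j), where S(g) = Σ_{θ⊆{1,2}} (−1)^{|θ|} g^θ. In particular the elements S(g), g ∈ ℚ², generate the space of cycles. -/
/-! The four terms of `Σ_j α_j S(g_j)` are push-forwards of `R` along `id`, `g ↦ g^{1}`,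
`g ↦ g^{2}` and `g ↦ g^∅`. The last three maps factor through a coordinate projection, and
the cycle condition says exactly that the push-forward of `R` along either projection
vanishes; so only the `id` term, which is `R` itself, survives. -/

namespace Finsupp

variable {α β : Type*} {M : Type*}

theorem sum_support_smul_single_one_eq_mapDomain [Semiring M] (x : α →₀ M) (f : α → β) :
    ∑ a ∈ x.support, x a • single (f a) (1 : M) = mapDomain f x := by
  simp only [smul_single_one, mapDomain, Finsupp.sum]

theorem mapDomain_eq_zero_of_sum_fiber_eq_zero [AddCommMonoid M] [DecidableEq β]
    {f : α → β} {x : α →₀ M} (hx : ∀ b, ∑ a ∈ x.support with f a = b, x a = 0) :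
    mapDomain f x = 0 := by
  ext b
  by_cases hb : b ∈ Set.range f
  · obtain ⟨a, rfl⟩ := hb
    rw [mapDomain_apply_eq_sum, hx, coe_zero, Pi.zero_apply]
  · exact mapDomain_of_notMem_range x b hb

theorem mapDomain_comp_eq_zero [AddCommMonoid M] {γ : Type*} {f : α → β} {x : α →₀ M}
    (g : β → γ) (hx : mapDomain f x = 0) : mapDomain (g ∘ f) x = 0 := by
  rw [mapDomain_comp, hx, mapDomain_zero]

end Finsupp

open Finsupp in
/-- any 1-cycle R = Σ α_j g_j in Θ (edges indexed by ℚ², with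
vanishing boundary over type-1 and type-2 vertices) equals Σ_j α_j S(g_j),
where S(g) = Σ_{θ⊆{1,2}} (−1)^{|θ|} g^θ. -/
theorem stmt_15 (R : (ℚ × ℚ) →₀ ℚ)
    (h1 : ∀ v : ℚ, ∑ p ∈ R.support.filter (fun p => p.1 = v), R p = 0)
    (h2 : ∀ v : ℚ, ∑ p ∈ R.support.filter (fun p => p.2 = v), R p = 0) :
    R = ∑ p ∈ R.support, R p •
      (Finsupp.single p (1 : ℚ) - Finsupp.single (p.1, (0 : ℚ)) 1
        - Finsupp.single ((0 : ℚ), p.2) 1 + Finsupp.single ((0 : ℚ), (0 : ℚ)) 1) := by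
  have hfst : mapDomain Prod.fst R = 0 := mapDomain_eq_zero_of_sum_fiber_eq_zero h1
  have hsnd : mapDomain Prod.snd R = 0 := mapDomain_eq_zero_of_sum_fiber_eq_zero h2
  have hfst_zero : mapDomain (fun p : ℚ × ℚ => (p.1, (0 : ℚ))) R = 0 :=
    mapDomain_comp_eq_zero (fun a => (a, 0)) hfst
  have hzero_snd : mapDomain (fun p : ℚ × ℚ => ((0 : ℚ), p.2)) R = 0 :=
    mapDomain_comp_eq_zero (fun b => (0, b)) hsnd
  have hzero_zero : mapDomain (fun _ : ℚ × ℚ => ((0 : ℚ), (0 : ℚ))) R = 0 :=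
    mapDomain_comp_eq_zero (fun _ => (0, 0)) hfst
  simp only [smul_sub, smul_add, Finset.sum_add_distrib, Finset.sum_sub_distrib,
    sum_support_smul_single_one_eq_mapDomain R (fun p => (p.1, (0 : ℚ))),
    sum_support_smul_single_one_eq_mapDomain R (fun p => ((0 : ℚ), p.2)),
    sum_support_smul_single_one_eq_mapDomain R (fun _ => ((0 : ℚ), (0 : ℚ))),
    hfst_zero, hzero_snd, hzero_zero, sub_zero, add_zero]
  exact ((sum_support_smul_single_one_eq_mapDomain R id).trans mapDomain_id).symm
end
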